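/- Let H be a Hilbert space and ν ∈ ℝ. A bounded operator S ∈ ℒ(L²_ν(ℝ,H)) is amnesic if and only if its ν-adjoint S^{*_ν} ∈ ℒ(L²_{−ν}(ℝ,H)) is causal. -/

import Mathlib

open MeasureTheory Complex Real
open scoped ENNReal InnerProductSpace ComplexInnerProductSpace

noncomputable section

/-- The exponentially weighted measure `e^{-2νt} dt` on `ℝ`. -/
def wMeas (ν : ℝ) : Measure ℝ :=
  volume.withDensity fun t => ENNReal.ofReal (Real.exp (-2 * ν * t))

/-- The exponentially weighted space `L²_ν(ℝ, H)`. -/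
abbrev Lnu (ν : ℝ) (H : Type*) [NormedAddCommGroup H] : Type _ := Lp H 2 (wMeas ν)

variable {H H₀ H₁ H₂ : Type*}

/-- The ν-product `⟨f,g⟩_ν = ∫ ⟨f(t), g(t)⟩_H dt` (integral w.r.t. Lebesgue measure). -/
def nuPair [NormedAddCommGroup H] [InnerProductSpace ℂ H] {a b : ℝ}
    (f : Lnu a H) (g : Lnu b H) : ℂ :=
  ∫ t : ℝ, ⟪f t, g t⟫_ℂ

/-- The weak time derivative, as a linear relation on `L²_ν(ℝ,H)`. -/
def derivRel (ν : ℝ) (H : Type*) [NormedAddCommGroup H] [InnerProductSpace ℂ H]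
    [CompleteSpace H] : Set (Lnu ν H × Lnu ν H) :=
  {p | ∀ φ : ℝ → ℝ, ContDiff ℝ (⊤ : ℕ∞) φ → HasCompactSupport φ →
      (∫ t : ℝ, φ t • p.2 t) = - ∫ t : ℝ, deriv φ t • p.1 t}

/-- The ν-adjoint relation (with respect to the ν-product pairing). -/
def dualRel [NormedAddCommGroup H₀] [InnerProductSpace ℂ H₀]
    [NormedAddCommGroup H₁] [InnerProductSpace ℂ H₁] (a b : ℝ)
    (A : Set (Lnu a H₀ × Lnu a H₁)) : Set (Lnu b H₁ × Lnu b H₀) :=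
  {g | ∀ f ∈ A, nuPair f.1 g.2 = nuPair f.2 g.1}

/-- The adjoint of a relation between Hilbert spaces (w.r.t. the inner products). -/
def adjRel {X Y : Type*} [NormedAddCommGroup X] [InnerProductSpace ℂ X]
    [NormedAddCommGroup Y] [InnerProductSpace ℂ Y] (A : Set (X × Y)) : Set (Y × X) :=
  {g | ∀ f ∈ A, (⟪f.1, g.2⟫_ℂ) = ⟪f.2, g.1⟫_ℂ}

/-- Pointwise lift of a (partial) operator `A` to `L²_ν`. -/
def liftRel [NormedAddCommGroup H₀] [InnerProductSpace ℂ H₀]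
    [NormedAddCommGroup H₁] [InnerProductSpace ℂ H₁] (ν : ℝ)
    (A : H₀ →ₗ.[ℂ] H₁) : Set (Lnu ν H₀ × Lnu ν H₁) :=
  {p | ∀ᵐ t : ℝ, ∃ h : p.1 t ∈ A.domain, p.2 t = A ⟨p.1 t, h⟩}

def relDom {X Y : Type*} (A : Set (X × Y)) : Set X := {x | ∃ y, (x, y) ∈ A}
def relRan {X Y : Type*} (A : Set (X × Y)) : Set Y := {y | ∃ x, (x, y) ∈ A}
def relKer {X Y : Type*} [Zero Y] (A : Set (X × Y)) : Set X := {x | (x, 0) ∈ A}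
def relComp {X Y Z : Type*} (B : Set (Y × Z)) (A : Set (X × Y)) : Set (X × Z) :=
  {p | ∃ y, (p.1, y) ∈ A ∧ (y, p.2) ∈ B}
def relAdd {X Y : Type*} [Add Y] (A C : Set (X × Y)) : Set (X × Y) :=
  {p | ∃ y₁ y₂, (p.1, y₁) ∈ A ∧ (p.1, y₂) ∈ C ∧ p.2 = y₁ + y₂}
def IsSingleValued {X Y : Type*} (A : Set (X × Y)) : Prop :=
  ∀ x y₁ y₂, (x, y₁) ∈ A → (x, y₂) ∈ A → y₁ = y₂

/-- The ν-annihilator of a subset of `L²_a(ℝ,H)` inside `L²_b(ℝ,H)`. -/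
def nuAnn [NormedAddCommGroup H] [InnerProductSpace ℂ H] (a b : ℝ) (F : Set (Lnu a H)) :
    Set (Lnu b H) := {g | ∀ f ∈ F, nuPair f g = 0}

end
section helpers

open MeasureTheory Set

variable {H : Type*} [NormedAddCommGroup H] [InnerProductSpace ℂ H]

lemma wMeas_density_meas (ν : ℝ) :
    Measurable fun t : ℝ => ENNReal.ofReal (Real.exp (-2 * ν * t)) :=
  (Real.measurable_exp.comp (measurable_const.mul measurable_id)).ennreal_ofReal

lemma wMeas_ae (ν : ℝ) : ae (wMeas ν) = ae (volume : Measure ℝ) := by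
  ext s
  rw [mem_ae_iff, mem_ae_iff,
    show wMeas ν = volume.withDensity (fun t => ENNReal.ofReal (Real.exp (-2 * ν * t))) from rfl,
    withDensity_apply_eq_zero (wMeas_density_meas ν)]
  have h : {x : ℝ | ENNReal.ofReal (Real.exp (-2 * ν * x)) ≠ 0} = Set.univ := by
    ext x
    simp [ENNReal.ofReal_eq_zero, not_le, Real.exp_pos]
  rw [h, Set.univ_inter]

lemma Lnu.aesm (ν : ℝ) (k : Lnu ν H) :
    AEStronglyMeasurable (⇑k) (volume : Measure ℝ) := by
  obtain ⟨g, hg, hkg⟩ := Lp.aestronglyMeasurable k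
  exact ⟨g, hg, wMeas_ae ν ▸ hkg⟩

lemma aesm_wMeas (ν : ℝ) {f : ℝ → H} (h : AEStronglyMeasurable f (volume : Measure ℝ)) :
    AEStronglyMeasurable f (wMeas ν) := by
  obtain ⟨g, hg, hfg⟩ := h
  exact ⟨g, hg, (wMeas_ae ν).symm ▸ hfg⟩

lemma Lnu.integrable_sq (ν : ℝ) (k : Lnu ν H) :
    Integrable (fun t => ‖k t‖ ^ 2 * Real.exp (-2 * ν * t)) (volume : Measure ℝ) := by
  have h2' := (memLp_two_iff_integrable_sq_norm (Lp.aestronglyMeasurable k)).1 (Lp.memLp k)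
  have h2 : Integrable (fun x => ‖k x‖ ^ 2)
      (volume.withDensity fun t => ENNReal.ofReal (Real.exp (-2 * ν * t))) := h2'
  rw [integrable_withDensity_iff (wMeas_density_meas ν)
      (Filter.Eventually.of_forall fun x => ENNReal.ofReal_lt_top)] at h2
  have heq : (fun x : ℝ => ‖k x‖ ^ 2 * (ENNReal.ofReal (Real.exp (-2 * ν * x))).toReal)
      = fun x : ℝ => ‖k x‖ ^ 2 * Real.exp (-2 * ν * x) := by
    funext x
    rw [ENNReal.toReal_ofReal (Real.exp_nonneg _)]
  rwa [heq] at h2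

lemma key_test (w w' : ℝ) (hw : w' = -w) (s : Set ℝ) (hs : MeasurableSet s) (k : Lnu w H) :
    ∃ g : Lnu w' H,
      (∀ᵐ t : ℝ, t ∉ s → g t = 0) ∧
      (nuPair k g = 0 → ∀ᵐ t : ℝ, t ∈ s → k t = 0) ∧
      (nuPair g k = 0 → ∀ᵐ t : ℝ, t ∈ s → k t = 0) := by
  subst hw
  have hcm : Measurable fun t : ℝ => Real.exp (-2 * w * t) :=
    Real.measurable_exp.comp (measurable_const.mul measurable_id)
  set gfun : ℝ → H :=
    s.indicator (fun t => ((Real.exp (-2 * w * t) : ℝ) : ℂ) • k t) with hgfun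
  have haesm : AEStronglyMeasurable gfun (volume : Measure ℝ) := by
    apply AEStronglyMeasurable.indicator _ hs
    exact ((Complex.measurable_ofReal.comp hcm).aestronglyMeasurable).smul (Lnu.aesm w k)
  have hmem : MemLp gfun 2 (wMeas (-w)) := by
    rw [memLp_two_iff_integrable_sq_norm (aesm_wMeas (-w) haesm),
      show wMeas (-w) = volume.withDensity (fun t => ENNReal.ofReal (Real.exp (-2 * -w * t)))
        from rfl,
      integrable_withDensity_iff (wMeas_density_meas (-w))
        (Filter.Eventually.of_forall fun x => ENNReal.ofReal_lt_top)]
    apply Integrable.mono' (Lnu.integrable_sq w k)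
    · exact ((haesm.norm.aemeasurable.pow_const 2).mul
        ((wMeas_density_meas (-w)).ennreal_toReal.aemeasurable)).aestronglyMeasurable
    · refine Filter.Eventually.of_forall fun t => ?_
      rw [ENNReal.toReal_ofReal (Real.exp_nonneg _), Real.norm_eq_abs,
        _root_.abs_of_nonneg (by positivity)]
      by_cases hts : t ∈ s
      · rw [hgfun]
        simp only [Set.indicator_of_mem hts, norm_smul, Complex.norm_real, Real.norm_eq_abs,
          _root_.abs_of_nonneg (Real.exp_nonneg _)]
        have hexp : Real.exp (-2 * w * t) ^ 2 * Real.exp (-2 * -w * t)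
            = Real.exp (-2 * w * t) := by
          rw [sq, ← Real.exp_add, ← Real.exp_add]
          congr 1
          ring
        refine le_of_eq ?_
        calc (Real.exp (-2 * w * t) * ‖k t‖) ^ 2 * Real.exp (-2 * -w * t)
              = ‖k t‖ ^ 2 * (Real.exp (-2 * w * t) ^ 2 * Real.exp (-2 * -w * t)) := by ring
            _ = ‖k t‖ ^ 2 * Real.exp (-2 * w * t) := by rw [hexp]
      · rw [hgfun]
        simp only [Set.indicator_of_notMem hts, norm_zero, ne_eq, OfNat.ofNat_ne_zero,
          not_false_eq_true, zero_pow, zero_mul]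
        positivity
  have hcoe : ∀ᵐ t : ℝ, (hmem.toLp gfun) t = gfun t := (wMeas_ae (-w)) ▸ hmem.coeFn_toLp
  have hinner : ∀ᵐ t : ℝ,
      ⟪k t, (hmem.toLp gfun) t⟫_ℂ
        = ((s.indicator (fun t => ‖k t‖ ^ 2 * Real.exp (-2 * w * t)) t : ℝ) : ℂ) ∧
      ⟪(hmem.toLp gfun) t, k t⟫_ℂ
        = ((s.indicator (fun t => ‖k t‖ ^ 2 * Real.exp (-2 * w * t)) t : ℝ) : ℂ) := by
    filter_upwards [hcoe] with t ht
    rw [ht, hgfun]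
    by_cases hts : t ∈ s
    · simp only [Set.indicator_of_mem hts]
      constructor
      · rw [inner_smul_right, inner_self_eq_norm_sq_to_K]
        simp [RCLike.ofReal_mul, mul_comm]
      · rw [inner_smul_left, inner_self_eq_norm_sq_to_K, Complex.conj_ofReal]
        simp [RCLike.ofReal_mul, mul_comm]
    · simp [Set.indicator_of_notMem hts]
  have hu_int : Integrable (s.indicator fun t => ‖k t‖ ^ 2 * Real.exp (-2 * w * t))
      (volume : Measure ℝ) := (Lnu.integrable_sq w k).indicator hs
  have hpair1 : (∫ t : ℝ, ⟪k t, (hmem.toLp gfun) t⟫_ℂ)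
      = (((∫ t : ℝ, s.indicator (fun t => ‖k t‖ ^ 2 * Real.exp (-2 * w * t)) t) : ℝ) : ℂ) := by
    exact (integral_congr_ae (hinner.mono fun t ht => ht.1)).trans integral_ofReal
  have hpair2 : (∫ t : ℝ, ⟪(hmem.toLp gfun) t, k t⟫_ℂ)
      = (((∫ t : ℝ, s.indicator (fun t => ‖k t‖ ^ 2 * Real.exp (-2 * w * t)) t) : ℝ) : ℂ) := by
    exact (integral_congr_ae (hinner.mono fun t ht => ht.2)).trans integral_ofReal
  have hfinal : (∫ t : ℝ, s.indicator (fun t => ‖k t‖ ^ 2 * Real.exp (-2 * w * t)) t) = 0 →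
      ∀ᵐ t : ℝ, t ∈ s → k t = 0 := by
    intro h0
    have hz := (integral_eq_zero_iff_of_nonneg
      (fun t => Set.indicator_nonneg (fun t _ => by positivity) t) hu_int).1 h0
    filter_upwards [hz] with t ht hts
    rw [Set.indicator_of_mem hts] at ht
    simp only [Pi.zero_apply] at ht
    have he := Real.exp_pos (-2 * w * t)
    have hk2 : ‖k t‖ ^ 2 = 0 := by nlinarith [sq_nonneg ‖k t‖]
    have hk : ‖k t‖ = 0 := by
      exact pow_eq_zero_iff (n := 2) (by norm_num) |>.1 hk2
    simpa using hk
  refine ⟨hmem.toLp gfun, ?_, ?_, ?_⟩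
  · filter_upwards [hcoe] with t ht hts
    rw [ht, hgfun, Set.indicator_of_notMem hts]
  · intro h
    apply hfinal
    have h0 : (((∫ t : ℝ, s.indicator (fun t => ‖k t‖ ^ 2 * Real.exp (-2 * w * t)) t) : ℝ) : ℂ)
        = 0 := by
      rw [← hpair1]
      exact h
    exact_mod_cast h0
  · intro h
    apply hfinal
    have h0 : (((∫ t : ℝ, s.indicator (fun t => ‖k t‖ ^ 2 * Real.exp (-2 * w * t)) t) : ℝ) : ℂ)
        = 0 := by
      rw [← hpair2]
      exact h
    exact_mod_cast h0

end helpers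

/-- A bounded operator `S ∈ ℒ(L²_ν(ℝ,H))` is amnesic (preserves supports in
`(−∞,a]`) if and only if its ν-adjoint `S^{*_ν} ∈ ℒ(L²_{−ν}(ℝ,H))` is causal (preserves
supports in `[a,∞)`). -/
theorem statement17 (ν : ℝ) (H : Type*) [NormedAddCommGroup H] [InnerProductSpace ℂ H]
    [CompleteSpace H]
    (S : Lnu ν H →L[ℂ] Lnu ν H) (Sd : Lnu (-ν) H →L[ℂ] Lnu (-ν) H)
    -- `Sd` is the ν-adjoint `S^{*_ν}` of `S`
    (hSd : ∀ (f : Lnu ν H) (g : Lnu (-ν) H), nuPair (S f) g = nuPair f (Sd g)) :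
    -- `S` is amnesic iff `S^{*_ν}` is causal
    (∀ (a : ℝ) (f : Lnu ν H), (∀ᵐ t : ℝ, a < t → f t = 0) → ∀ᵐ t : ℝ, a < t → S f t = 0) ↔
    (∀ (a : ℝ) (g : Lnu (-ν) H), (∀ᵐ t : ℝ, t < a → g t = 0) →
      ∀ᵐ t : ℝ, t < a → Sd g t = 0) := by
  have hne : ∀ a : ℝ, ∀ᵐ t : ℝ, t ≠ a := by
    intro a
    rw [MeasureTheory.ae_iff]
    simp only [ne_eq, not_not, Set.setOf_eq_eq_singleton]
    exact Real.volume_singleton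
  constructor
  · -- amnesic → causal
    intro hS a g hg
    obtain ⟨f, hf0, _, himp⟩ :=
      key_test (-ν) ν (neg_neg ν).symm (Set.Iio a) measurableSet_Iio (Sd g)
    have hf' : ∀ᵐ t : ℝ, a < t → f t = 0 := by
      filter_upwards [hf0] with t ht hat
      exact ht (by simpa using not_lt.2 hat.le)
    have hSf := hS a f hf'
    have hzero : nuPair (S f) g = 0 := by
      simp only [nuPair]
      rw [show (0 : ℂ) = ∫ _ : ℝ, (0 : ℂ) by simp]
      apply MeasureTheory.integral_congr_ae
      filter_upwards [hSf, hg, hne a] with t h1 h2 h3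
      rcases h3.lt_or_gt with h | h
      · rw [h2 h, inner_zero_right]
      · rw [h1 h, inner_zero_left]
    rw [hSd] at hzero
    have := himp hzero
    filter_upwards [this] with t ht hta
    exact ht (Set.mem_Iio.2 hta)
  · -- causal → amnesic
    intro hSd' a f hf
    obtain ⟨g, hg0, himp, _⟩ :=
      key_test ν (-ν) rfl (Set.Ioi a) measurableSet_Ioi (S f)
    have hg' : ∀ᵐ t : ℝ, t < a → g t = 0 := by
      filter_upwards [hg0] with t ht hta
      exact ht (by simpa using not_lt.2 hta.le)
    have hSdg := hSd' a g hg'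
    have hzero : nuPair f (Sd g) = 0 := by
      simp only [nuPair]
      rw [show (0 : ℂ) = ∫ _ : ℝ, (0 : ℂ) by simp]
      apply MeasureTheory.integral_congr_ae
      filter_upwards [hf, hSdg, hne a] with t h1 h2 h3
      rcases h3.lt_or_gt with h | h
      · rw [h2 h, inner_zero_right]
      · rw [h1 h, inner_zero_left]
    rw [← hSd] at hzero
    have := himp hzero
    filter_upwards [this] with t ht hta
    exact ht (Set.mem_Ioi.2 hta)
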